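/- Let Q(∂u, ∂²v) = Σ Q^{αβγ} ∂_α u ∂_β ∂_γ v be a quadratic form on ℝ^{1+3} with constant coefficients satisfying the null condition Q^{αβγ} ξ_α ξ_β ξ_γ = 0 for all ξ ∈ ℝ⁴ with ξ₀² = c²(ξ₁² + ξ₂² + ξ₃²). Then there exists a constant C such that for all C² functions u, v and all (t,x) with r = |x| ≥ c t / 2, |Q^{αβγ} ∂_α u ∂_β ∂_γ v| ≤ (C/⟨r⟩) [ |Γu| |∂²v| + |∂u| |∂Γv| + |∂u| |∂v| + ⟨ct − r⟩ |∂u| |∂²v| ] at the point (t,x), where Γ ranges over the vector fields (∂, Ω, S). -/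

import Mathlib

/-!
Away from the origin write `ω = x/r` and `ξ = (-c, ω)`, a null covector. The identities
`r (∂_t + c ∂_r) = c S - (ct - r) ∂_t` and `r (∂_i - ω_i ∂_r) = Σ_j ω_j Ω_{ji}` show that
`∂_α w = ξ_α ∂_r w` up to an error of size `(|S w| + ⟨ct - r⟩ |∂ w| + |Ω w|) / r`.
Applied to `u`, and twice to `v` (the commutators `[∂, S]` and `[∂, Ω]` are first-order
derivatives), this gives `∂u ≈ ξ ∂_r u` and `∂²v ≈ ξ ⊗ ξ ∂_r² v`, and the null condition kills
the main term `Q(ξ, ξ, ξ) ∂_r u ∂_r² v`. For `r ≤ 1` the trivial bound suffices, as `⟨r⟩ ≤ √2`.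
-/

/-- Partial derivative `∂_α` on `ℝ^{1+3}` (coordinate `0` is time). -/
noncomputable def pd (α : Fin 4) (u : (Fin 4 → ℝ) → ℝ) : (Fin 4 → ℝ) → ℝ :=
  fun y => fderiv ℝ u y (Pi.single α 1)

/-- Rotation vector field `Ω_{ij} = xⁱ ∂_j - xʲ ∂_i`. -/
noncomputable def rotVF (i j : Fin 3) (u : (Fin 4 → ℝ) → ℝ) : (Fin 4 → ℝ) → ℝ :=
  fun y => y i.succ * pd j.succ u y - y j.succ * pd i.succ u y

/-- Scaling vector field `S = t ∂_t + r ∂_r = Σ_α x^α ∂_α`. -/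
noncomputable def scalingVF (u : (Fin 4 → ℝ) → ℝ) : (Fin 4 → ℝ) → ℝ :=
  fun y => ∑ α : Fin 4, y α * pd α u y

/-- Spatial radius `r = |x|` at a spacetime point `y = (t, x)`. -/
noncomputable def spr (y : Fin 4 → ℝ) : ℝ := Real.sqrt (∑ i : Fin 3, (y i.succ) ^ 2)

/-- Japanese bracket `⟨s⟩ = √(1+s²)`. -/
noncomputable def jb (s : ℝ) : ℝ := Real.sqrt (1 + s ^ 2)

/-- `|∂u|` : sum of the magnitudes of all first derivatives. -/
noncomputable def dAbs (u : (Fin 4 → ℝ) → ℝ) (y : Fin 4 → ℝ) : ℝ :=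
  ∑ α : Fin 4, |pd α u y|

/-- `|∂²u|` : sum of the magnitudes of all second derivatives. -/
noncomputable def d2Abs (u : (Fin 4 → ℝ) → ℝ) (y : Fin 4 → ℝ) : ℝ :=
  ∑ α : Fin 4, ∑ β : Fin 4, |pd α (pd β u) y|

/-- `|Γu|` : sum of `|Γ_a u|` over the eight fields `(∂, Ω, S)`. -/
noncomputable def gammaAbs (u : (Fin 4 → ℝ) → ℝ) (y : Fin 4 → ℝ) : ℝ :=
  (∑ α : Fin 4, |pd α u y|) +
    (∑ i : Fin 3, ∑ j : Fin 3, if i < j then |rotVF i j u y| else 0) +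
    |scalingVF u y|

/-- `|∂Γu|` : sum of `|∂_β Γ_a u|` over the eight fields and all `β`. -/
noncomputable def dGammaAbs (u : (Fin 4 → ℝ) → ℝ) (y : Fin 4 → ℝ) : ℝ :=
  (∑ β : Fin 4, ∑ α : Fin 4, |pd β (pd α u) y|) +
    (∑ β : Fin 4, ∑ i : Fin 3, ∑ j : Fin 3, if i < j then |pd β (rotVF i j u) y| else 0) +
    ∑ β : Fin 4, |pd β (scalingVF u) y|

open Finset

section TrilinearForm

variable {ι : Type*} [Fintype ι]

def trilinear (Q : ι → ι → ι → ℝ) (a : ι → ℝ) (b : ι → ι → ℝ) : ℝ :=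
  ∑ α, ∑ β, ∑ γ, Q α β γ * a α * b β γ

lemma abs_trilinear_le (Q : ι → ι → ι → ℝ) {a : ι → ℝ} {b : ι → ι → ℝ} {A B : ℝ}
    (ha : ∀ α, |a α| ≤ A) (hb : ∀ β γ, |b β γ| ≤ B) :
    |trilinear Q a b| ≤ (∑ α, ∑ β, ∑ γ, |Q α β γ|) * (A * B) := by
  have hterm : ∀ α β γ, |Q α β γ * a α * b β γ| ≤ |Q α β γ| * (A * B) := fun α β γ => by
    rw [abs_mul, abs_mul, mul_assoc]
    exact mul_le_mul_of_nonneg_left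
      (mul_le_mul (ha α) (hb β γ) (abs_nonneg _) ((abs_nonneg _).trans (ha α))) (abs_nonneg _)
  simp only [trilinear, sum_mul]
  refine (abs_sum_le_sum_abs _ _).trans (sum_le_sum fun α _ => ?_)
  refine (abs_sum_le_sum_abs _ _).trans (sum_le_sum fun β _ => ?_)
  exact (abs_sum_le_sum_abs _ _).trans (sum_le_sum fun γ _ => hterm α β γ)

lemma trilinear_eq_of_null (Q : ι → ι → ι → ℝ) (a ξ : ι → ℝ) (b : ι → ι → ℝ) (T W : ℝ)
    (hξ : trilinear Q ξ (fun β γ => ξ β * ξ γ) = 0) :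
    trilinear Q a b = trilinear Q (fun α => a α - ξ α * T) b
      + trilinear Q (fun α => ξ α * T) (fun β γ => b β γ - ξ β * ξ γ * W) := by
  have hsplit : trilinear Q a b = trilinear Q (fun α => a α - ξ α * T) b
      + trilinear Q (fun α => ξ α * T) (fun β γ => b β γ - ξ β * ξ γ * W)
      + T * W * trilinear Q ξ (fun β γ => ξ β * ξ γ) := by
    simp only [trilinear, mul_sum, ← sum_add_distrib]
    exact sum_congr rfl fun _ _ => sum_congr rfl fun _ _ => sum_congr rfl fun _ _ => by ring
  rw [hsplit, hξ, mul_zero, add_zero]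

lemma abs_trilinear_le_of_null (Q : ι → ι → ι → ℝ) {a ξ : ι → ℝ} {b : ι → ι → ℝ}
    {T W L B εa εb : ℝ} (hξ : trilinear Q ξ (fun β γ => ξ β * ξ γ) = 0)
    (hξL : ∀ α, |ξ α| ≤ L) (ha : ∀ α, |a α - ξ α * T| ≤ εa) (hbB : ∀ β γ, |b β γ| ≤ B)
    (hb : ∀ β γ, |b β γ - ξ β * ξ γ * W| ≤ εb) :
    |trilinear Q a b| ≤ (∑ α, ∑ β, ∑ γ, |Q α β γ|) * (εa * B + L * |T| * εb) := by
  have hξT : ∀ α, |ξ α * T| ≤ L * |T| := fun α => by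
    rw [abs_mul]; exact mul_le_mul_of_nonneg_right (hξL α) (abs_nonneg T)
  rw [trilinear_eq_of_null Q a ξ b T W hξ, mul_add]
  exact (abs_add_le _ _).trans
    (add_le_add (abs_trilinear_le Q ha hbB) (abs_trilinear_le Q hξT hb))

end TrilinearForm

lemma sum_abs_of_antisymm {ι : Type*} [Fintype ι] [LinearOrder ι] (F : ι → ι → ℝ)
    (hF : ∀ i j, F j i = -F i j) :
    ∑ i, ∑ j, |F i j| = 2 * ∑ i, ∑ j, if i < j then |F i j| else 0 := by
  have hsplit : ∀ i j, |F i j|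
      = (if i < j then |F i j| else 0) + if j < i then |F j i| else 0 := fun i j => by
    rcases lt_trichotomy i j with h | rfl | h
    · simp [h, h.not_gt]
    · simp [show F i i = 0 by linarith [hF i i]]
    · simp [h, h.not_gt, hF i j]
  rw [sum_congr rfl fun i _ => sum_congr rfl fun j _ => hsplit i j]
  simp only [sum_add_distrib]
  rw [sum_comm (f := fun i j => if j < i then |F j i| else 0)]
  ring

noncomputable section NullFrame

-- `ω = x / r`; at `r = 0` division by zero makes it `0`.
def unitRadial (y : Fin 4 → ℝ) (j : Fin 3) : ℝ := y j.succ / spr y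

def nullVec (c : ℝ) (y : Fin 4 → ℝ) : Fin 4 → ℝ := Fin.cons (-c) (unitRadial y)

def radialPd (w : (Fin 4 → ℝ) → ℝ) (y : Fin 4 → ℝ) : ℝ :=
  ∑ j, unitRadial y j * pd j.succ w y

-- Controls `r |∂_α w - ξ_α ∂_r w|` (`abs_pd_sub_nullVec_mul_le`) through `S w`, `Ω w` and
-- `∂_t w` carrying the good weight `|ct - r|`.
def goodDerivNorm (c : ℝ) (w : (Fin 4 → ℝ) → ℝ) (y : Fin 4 → ℝ) : ℝ :=
  |c| * |scalingVF w y| + |c * y 0 - spr y| * |pd 0 w y| + ∑ i, ∑ j, |rotVF i j w y|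

variable {y : Fin 4 → ℝ}

lemma sq_spr (y : Fin 4 → ℝ) : spr y ^ 2 = ∑ i : Fin 3, y i.succ ^ 2 :=
  Real.sq_sqrt (sum_nonneg fun _ _ => sq_nonneg _)

lemma spr_nonneg (y : Fin 4 → ℝ) : 0 ≤ spr y := Real.sqrt_nonneg _

lemma abs_le_spr (y : Fin 4 → ℝ) (i : Fin 3) : |y i.succ| ≤ spr y :=
  Real.abs_le_sqrt (single_le_sum (f := fun j : Fin 3 => y j.succ ^ 2)
    (fun _ _ => sq_nonneg _) (mem_univ i))

lemma abs_unitRadial_le_one (y : Fin 4 → ℝ) (i : Fin 3) : |unitRadial y i| ≤ 1 := by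
  rw [unitRadial, abs_div, abs_of_nonneg (spr_nonneg y)]
  exact div_le_one_of_le₀ (abs_le_spr y i) (spr_nonneg y)

lemma spr_mul_unitRadial (hy : spr y ≠ 0) (i : Fin 3) : spr y * unitRadial y i = y i.succ :=
  mul_div_cancel₀ _ hy

lemma sum_unitRadial_sq (hy : spr y ≠ 0) : ∑ i, unitRadial y i ^ 2 = 1 := by
  simp only [unitRadial, div_pow, ← sum_div, ← sq_spr]
  exact div_self (pow_ne_zero 2 hy)

lemma nullVec_zero (c : ℝ) (y : Fin 4 → ℝ) : nullVec c y 0 = -c := rfl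

lemma nullVec_succ (c : ℝ) (y : Fin 4 → ℝ) (i : Fin 3) :
    nullVec c y i.succ = unitRadial y i := rfl

lemma nullVec_zero_sq (c : ℝ) (hy : spr y ≠ 0) :
    nullVec c y 0 ^ 2 = c ^ 2 * ∑ i : Fin 3, nullVec c y i.succ ^ 2 := by
  simp only [nullVec_zero, nullVec_succ, sum_unitRadial_sq hy]
  ring

lemma abs_nullVec_le (c : ℝ) (y : Fin 4 → ℝ) (α : Fin 4) : |nullVec c y α| ≤ |c| + 1 := by
  cases α using Fin.cases with
  | zero => rw [nullVec_zero, abs_neg]; linarith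
  | succ i => rw [nullVec_succ]; linarith [abs_unitRadial_le_one y i, abs_nonneg c]

lemma spr_mul_radialPd (w : (Fin 4 → ℝ) → ℝ) (hy : spr y ≠ 0) :
    spr y * radialPd w y = ∑ j : Fin 3, y j.succ * pd j.succ w y := by
  simp only [radialPd, mul_sum, ← mul_assoc, spr_mul_unitRadial hy]

lemma spr_mul_pd_zero_add (c : ℝ) (w : (Fin 4 → ℝ) → ℝ) (hy : spr y ≠ 0) :
    spr y * (pd 0 w y + c * radialPd w y)
      = c * scalingVF w y - (c * y 0 - spr y) * pd 0 w y := by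
  have hS : scalingVF w y = y 0 * pd 0 w y + spr y * radialPd w y := by
    rw [spr_mul_radialPd w hy, scalingVF, Fin.sum_univ_succ]
  rw [hS]
  ring

lemma spr_mul_pd_succ_sub (w : (Fin 4 → ℝ) → ℝ) (hy : spr y ≠ 0) (i : Fin 3) :
    spr y * (pd i.succ w y - unitRadial y i * radialPd w y)
      = ∑ j, unitRadial y j * rotVF j i w y := by
  have hrot : ∀ j, unitRadial y j * rotVF j i w y
      = spr y * unitRadial y j ^ 2 * pd i.succ w y
        - spr y * unitRadial y i * (unitRadial y j * pd j.succ w y) := fun j => by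
    rw [rotVF, ← spr_mul_unitRadial hy j, ← spr_mul_unitRadial hy i]
    ring
  rw [sum_congr rfl fun j _ => hrot j, sum_sub_distrib, ← sum_mul, ← mul_sum, ← mul_sum,
    sum_unitRadial_sq hy, radialPd]
  ring

lemma abs_pd_sub_nullVec_mul_le (c : ℝ) (w : (Fin 4 → ℝ) → ℝ) (hy : 0 < spr y) (α : Fin 4) :
    |pd α w y - nullVec c y α * radialPd w y| ≤ goodDerivNorm c w y / spr y := by
  rw [le_div_iff₀ hy, ← abs_of_pos hy, ← abs_mul, mul_comm]
  have hrot : 0 ≤ ∑ i : Fin 3, ∑ j : Fin 3, |rotVF i j w y| :=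
    sum_nonneg fun _ _ => sum_nonneg fun _ _ => abs_nonneg _
  cases α using Fin.cases with
  | zero =>
    rw [nullVec_zero, neg_mul, sub_neg_eq_add, spr_mul_pd_zero_add c w hy.ne']
    calc |c * scalingVF w y - (c * y 0 - spr y) * pd 0 w y|
        ≤ |c| * |scalingVF w y| + |c * y 0 - spr y| * |pd 0 w y| := by
          simpa only [abs_mul] using abs_sub (c * scalingVF w y) ((c * y 0 - spr y) * pd 0 w y)
      _ ≤ goodDerivNorm c w y := le_add_of_nonneg_right hrot
  | succ i =>
    rw [nullVec_succ, spr_mul_pd_succ_sub w hy.ne']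
    calc |∑ j, unitRadial y j * rotVF j i w y| ≤ ∑ j, |rotVF j i w y| := by
          refine (abs_sum_le_sum_abs _ _).trans (sum_le_sum fun j _ => ?_)
          rw [abs_mul]
          exact mul_le_of_le_one_left (abs_nonneg _) (abs_unitRadial_le_one y j)
      _ ≤ ∑ j, ∑ k, |rotVF k j w y| :=
          single_le_sum (f := fun j => ∑ k, |rotVF k j w y|)
            (fun _ _ => sum_nonneg fun _ _ => abs_nonneg _) (mem_univ i)
      _ = ∑ k, ∑ j, |rotVF k j w y| := sum_comm
      _ ≤ goodDerivNorm c w y := le_add_of_nonneg_left (by positivity)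

end NullFrame

section Calculus

variable {v : (Fin 4 → ℝ) → ℝ}

lemma differentiable_pd (hv : ContDiff ℝ 2 v) (γ : Fin 4) : Differentiable ℝ (pd γ v) :=
  ((hv.fderiv_right (m := 1) (by norm_num)).differentiable one_ne_zero).clm_apply
    (differentiable_const _)

lemma pd_pd_eq_fderiv (hv : ContDiff ℝ 2 v) (β γ : Fin 4) (y : Fin 4 → ℝ) :
    pd β (pd γ v) y = fderiv ℝ (fderiv ℝ v) y (Pi.single β 1) (Pi.single γ 1) := by
  have hD : DifferentiableAt ℝ (fderiv ℝ v) y :=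
    (hv.fderiv_right (m := 1) (by norm_num)).differentiable one_ne_zero y
  change fderiv ℝ (fun z => fderiv ℝ v z (Pi.single γ 1)) y (Pi.single β 1) = _
  rw [fderiv_clm_apply hD (differentiableAt_const _)]
  simp

lemma pd_pd_comm (hv : ContDiff ℝ 2 v) (β γ : Fin 4) (y : Fin 4 → ℝ) :
    pd β (pd γ v) y = pd γ (pd β v) y := by
  rw [pd_pd_eq_fderiv hv, pd_pd_eq_fderiv hv]
  exact hv.contDiffAt.isSymmSndFDerivAt (by simp) _ _

lemma pd_coord_mul {f : (Fin 4 → ℝ) → ℝ} {y : Fin 4 → ℝ} (hf : DifferentiableAt ℝ f y)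
    (α γ : Fin 4) :
    pd γ (fun z => z α * f z) y = (if α = γ then f y else 0) + y α * pd γ f y := by
  change fderiv ℝ (fun z => z α * f z) y (Pi.single γ 1) = _
  rw [fderiv_fun_mul (hasFDerivAt_apply α y).differentiableAt hf, (hasFDerivAt_apply α y).fderiv]
  simp [Pi.single_apply, eq_comm, pd]
  ring

lemma pd_scalingVF (hv : ContDiff ℝ 2 v) (γ : Fin 4) (y : Fin 4 → ℝ) :
    pd γ (scalingVF v) y = pd γ v y + scalingVF (pd γ v) y := by
  have hterm : ∀ α, DifferentiableAt ℝ (fun z => z α * pd α v z) y := fun α =>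
    ((hasFDerivAt_apply α y).differentiableAt).mul (differentiable_pd hv α y)
  have hsum : pd γ (scalingVF v) y = ∑ α, pd γ (fun z => z α * pd α v z) y := by
    change fderiv ℝ (fun z => ∑ α, z α * pd α v z) y (Pi.single γ 1) = _
    rw [fderiv_fun_sum fun α _ => hterm α]
    simp [pd]
  simp only [hsum, pd_coord_mul (differentiable_pd hv _ y), sum_add_distrib, sum_ite_eq',
    mem_univ, if_true, scalingVF, pd_pd_comm hv γ]

lemma pd_rotVF (hv : ContDiff ℝ 2 v) (i j : Fin 3) (γ : Fin 4) (y : Fin 4 → ℝ) :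
    pd γ (rotVF i j v) y = (if i.succ = γ then pd j.succ v y else 0)
      - (if j.succ = γ then pd i.succ v y else 0) + rotVF i j (pd γ v) y := by
  have hterm : ∀ α β, DifferentiableAt ℝ (fun z => z α * pd β v z) y := fun α β =>
    ((hasFDerivAt_apply α y).differentiableAt).mul (differentiable_pd hv β y)
  have hsub : pd γ (rotVF i j v) y
      = pd γ (fun z => z i.succ * pd j.succ v z) y
        - pd γ (fun z => z j.succ * pd i.succ v z) y := by
    change fderiv ℝ (fun z => z i.succ * pd j.succ v z - z j.succ * pd i.succ v z) y
      (Pi.single γ 1) = _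
    rw [fderiv_fun_sub (hterm _ _) (hterm _ _)]
    rfl
  rw [hsub, pd_coord_mul (differentiable_pd hv _ y), pd_coord_mul (differentiable_pd hv _ y),
    rotVF, pd_pd_comm hv γ, pd_pd_comm hv γ]
  ring

lemma pd_rotVF_swap (v : (Fin 4 → ℝ) → ℝ) (i j : Fin 3) (β : Fin 4) (y : Fin 4 → ℝ) :
    pd β (rotVF j i v) y = -pd β (rotVF i j v) y := by
  have h : rotVF j i v = fun z => -rotVF i j v z := by
    funext z; simp only [rotVF]; ring
  simp only [pd, h, fderiv_fun_neg, neg_apply]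

end Calculus

section Sizes

variable (u v : (Fin 4 → ℝ) → ℝ) (y : Fin 4 → ℝ)

lemma abs_pd_le_dAbs (α : Fin 4) : |pd α u y| ≤ dAbs u y :=
  single_le_sum (f := fun β => |pd β u y|) (fun _ _ => abs_nonneg _) (mem_univ α)

lemma abs_pd_pd_le_d2Abs (β γ : Fin 4) : |pd β (pd γ v) y| ≤ d2Abs v y :=
  (single_le_sum (f := fun δ => |pd β (pd δ v) y|) (fun _ _ => abs_nonneg _) (mem_univ γ)).trans
    (single_le_sum (f := fun α => ∑ δ, |pd α (pd δ v) y|)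
      (fun _ _ => sum_nonneg fun _ _ => abs_nonneg _) (mem_univ β))

lemma dAbs_nonneg : 0 ≤ dAbs u y := sum_nonneg fun _ _ => abs_nonneg _

lemma d2Abs_nonneg : 0 ≤ d2Abs v y := sum_nonneg fun _ _ => sum_nonneg fun _ _ => abs_nonneg _

lemma sum_abs_rotVF_eq (w : (Fin 4 → ℝ) → ℝ) :
    ∑ i, ∑ j, |rotVF i j w y| = 2 * ∑ i, ∑ j, if i < j then |rotVF i j w y| else 0 :=
  sum_abs_of_antisymm _ fun i j => by simp only [rotVF]; ring

lemma sum_abs_pd_rotVF_eq (γ : Fin 4) :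
    ∑ i, ∑ j, |pd γ (rotVF i j v) y|
      = 2 * ∑ i, ∑ j, if i < j then |pd γ (rotVF i j v) y| else 0 :=
  sum_abs_of_antisymm _ fun i j => pd_rotVF_swap v i j γ y

lemma gammaAbs_nonneg : 0 ≤ gammaAbs u y := by
  unfold gammaAbs
  positivity

lemma abs_scalingVF_le_gammaAbs : |scalingVF u y| ≤ gammaAbs u y := by
  have := dAbs_nonneg u y
  have : 0 ≤ ∑ i : Fin 3, ∑ j : Fin 3, if i < j then |rotVF i j u y| else 0 := by positivity
  simp only [gammaAbs, dAbs] at *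
  linarith

lemma sum_abs_rotVF_le_gammaAbs : ∑ i, ∑ j, |rotVF i j u y| ≤ 2 * gammaAbs u y := by
  have := dAbs_nonneg u y
  rw [sum_abs_rotVF_eq]
  simp only [gammaAbs, dAbs] at *
  linarith [abs_nonneg (scalingVF u y)]

lemma dGammaAbs_nonneg : 0 ≤ dGammaAbs v y := by
  unfold dGammaAbs
  have := d2Abs_nonneg v y
  positivity

lemma abs_pd_scalingVF_le_dGammaAbs (γ : Fin 4) : |pd γ (scalingVF v) y| ≤ dGammaAbs v y := by
  have := single_le_sum (f := fun β => |pd β (scalingVF v) y|) (fun _ _ => abs_nonneg _)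
    (mem_univ γ)
  have := d2Abs_nonneg v y
  have : 0 ≤ ∑ β : Fin 4, ∑ i : Fin 3, ∑ j : Fin 3,
      if i < j then |pd β (rotVF i j v) y| else 0 := by positivity
  simp only [dGammaAbs, d2Abs] at *
  linarith

lemma sum_abs_pd_rotVF_le_dGammaAbs (γ : Fin 4) :
    ∑ i, ∑ j, |pd γ (rotVF i j v) y| ≤ 2 * dGammaAbs v y := by
  have := single_le_sum (f := fun β => ∑ i : Fin 3, ∑ j : Fin 3,
      if i < j then |pd β (rotVF i j v) y| else 0) (fun _ _ => by positivity) (mem_univ γ)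
  have := d2Abs_nonneg v y
  have : 0 ≤ ∑ β : Fin 4, |pd β (scalingVF v) y| := by positivity
  rw [sum_abs_pd_rotVF_eq]
  simp only [dGammaAbs, d2Abs] at *
  linarith

variable {v}

lemma abs_scalingVF_pd_le (hv : ContDiff ℝ 2 v) (γ : Fin 4) :
    |scalingVF (pd γ v) y| ≤ dGammaAbs v y + dAbs v y := by
  rw [eq_sub_of_add_eq' (pd_scalingVF hv γ y).symm]
  exact (abs_sub _ _).trans
    (add_le_add (abs_pd_scalingVF_le_dGammaAbs v y γ) (abs_pd_le_dAbs v y γ))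

lemma sum_abs_rotVF_pd_le (hv : ContDiff ℝ 2 v) (γ : Fin 4) :
    ∑ i, ∑ j, |rotVF i j (pd γ v) y| ≤ 2 * dGammaAbs v y + 18 * dAbs v y := by
  have hite : ∀ (p : Prop) [Decidable p] (α : Fin 4), |if p then pd α v y else 0| ≤ dAbs v y :=
    fun p _ α => by
      split_ifs
      · exact abs_pd_le_dAbs v y α
      · simpa using dAbs_nonneg v y
  have hterm : ∀ i j, |rotVF i j (pd γ v) y| ≤ |pd γ (rotVF i j v) y| + 2 * dAbs v y :=
    fun i j => by
      rw [eq_sub_of_add_eq' (pd_rotVF hv i j γ y).symm]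
      refine (abs_sub _ _).trans ?_
      have := (abs_sub _ _).trans (add_le_add (hite (i.succ = γ) j.succ) (hite (j.succ = γ) i.succ))
      linarith
  calc ∑ i, ∑ j, |rotVF i j (pd γ v) y|
      ≤ ∑ i, ∑ j, (|pd γ (rotVF i j v) y| + 2 * dAbs v y) :=
        sum_le_sum fun i _ => sum_le_sum fun j _ => hterm i j
    _ = ∑ i, ∑ j, |pd γ (rotVF i j v) y| + 18 * dAbs v y := by
        simp only [sum_add_distrib, sum_const, card_univ, Fintype.card_fin]
        ring
    _ ≤ 2 * dGammaAbs v y + 18 * dAbs v y := by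
        linarith [sum_abs_pd_rotVF_le_dGammaAbs v y γ]

end Sizes

lemma one_le_jb (s : ℝ) : 1 ≤ jb s := Real.one_le_sqrt.2 (by nlinarith [sq_nonneg s])

lemma abs_le_jb (s : ℝ) : |s| ≤ jb s := Real.abs_le_sqrt (by linarith)

lemma jb_pos (s : ℝ) : 0 < jb s := zero_lt_one.trans_le (one_le_jb s)

lemma one_le_sqrt_two_div_jb {s : ℝ} (hs : |s| ≤ 1) : 1 ≤ √2 / jb s := by
  rw [one_le_div (jb_pos s)]
  exact Real.sqrt_le_sqrt (by nlinarith [sq_abs s, abs_nonneg s])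

lemma inv_le_sqrt_two_div_jb {s : ℝ} (hs : 1 ≤ s) : s⁻¹ ≤ √2 / jb s := by
  have hjb : jb s ≤ √2 * s := by
    rw [jb, show √2 * s = √(2 * s ^ 2) by
      rw [Real.sqrt_mul zero_le_two, Real.sqrt_sq (by linarith)]]
    exact Real.sqrt_le_sqrt (by nlinarith)
  rw [inv_eq_one_div, div_le_div_iff₀ (by linarith) (jb_pos s)]
  linarith

noncomputable def nullFormMajorant (c : ℝ) (u v : (Fin 4 → ℝ) → ℝ) (y : Fin 4 → ℝ) : ℝ :=
  gammaAbs u y * d2Abs v y + dAbs u y * dGammaAbs v y + dAbs u y * dAbs v y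
    + jb (c * y 0 - spr y) * dAbs u y * d2Abs v y

lemma dAbs_mul_d2Abs_le_nullFormMajorant (c : ℝ) (u v : (Fin 4 → ℝ) → ℝ) (y : Fin 4 → ℝ) :
    dAbs u y * d2Abs v y ≤ nullFormMajorant c u v y := by
  have := mul_le_mul_of_nonneg_right (one_le_jb (c * y 0 - spr y))
    (mul_nonneg (dAbs_nonneg u y) (d2Abs_nonneg v y))
  have := mul_nonneg (gammaAbs_nonneg u y) (d2Abs_nonneg v y)
  have := mul_nonneg (dAbs_nonneg u y) (dGammaAbs_nonneg v y)
  have := mul_nonneg (dAbs_nonneg u y) (dAbs_nonneg v y)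
  rw [nullFormMajorant]
  linarith

lemma nullFormMajorant_nonneg (c : ℝ) (u v : (Fin 4 → ℝ) → ℝ) (y : Fin 4 → ℝ) :
    0 ≤ nullFormMajorant c u v y :=
  (mul_nonneg (dAbs_nonneg u y) (d2Abs_nonneg v y)).trans
    (dAbs_mul_d2Abs_le_nullFormMajorant c u v y)

section GoodDerivatives

variable {v : (Fin 4 → ℝ) → ℝ} {y : Fin 4 → ℝ}

lemma abs_radialPd_le (w : (Fin 4 → ℝ) → ℝ) (y : Fin 4 → ℝ) : |radialPd w y| ≤ dAbs w y := by
  calc |radialPd w y| ≤ ∑ j : Fin 3, |pd j.succ w y| := by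
        refine (abs_sum_le_sum_abs _ _).trans (sum_le_sum fun j _ => ?_)
        rw [abs_mul]
        exact mul_le_of_le_one_left (abs_nonneg _) (abs_unitRadial_le_one y j)
    _ ≤ dAbs w y := by
        rw [dAbs, Fin.sum_univ_succ]
        exact le_add_of_nonneg_left (abs_nonneg _)

lemma goodDerivNorm_le (c : ℝ) (u : (Fin 4 → ℝ) → ℝ) (y : Fin 4 → ℝ) :
    goodDerivNorm c u y ≤ (|c| + 2) * gammaAbs u y + jb (c * y 0 - spr y) * dAbs u y := by
  have hS := mul_le_mul_of_nonneg_left (abs_scalingVF_le_gammaAbs u y) (abs_nonneg c)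
  have hP := mul_le_mul (abs_le_jb (c * y 0 - spr y)) (abs_pd_le_dAbs u y 0) (abs_nonneg _)
    (zero_le_one.trans (one_le_jb _))
  have := sum_abs_rotVF_le_gammaAbs u y
  rw [goodDerivNorm]
  linarith

lemma goodDerivNorm_pd_le (c : ℝ) (hv : ContDiff ℝ 2 v) (γ : Fin 4) :
    goodDerivNorm c (pd γ v) y
      ≤ (|c| + 18) * (dGammaAbs v y + dAbs v y) + jb (c * y 0 - spr y) * d2Abs v y := by
  have hS := mul_le_mul_of_nonneg_left (abs_scalingVF_pd_le y hv γ) (abs_nonneg c)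
  have hP := mul_le_mul (abs_le_jb (c * y 0 - spr y)) (abs_pd_pd_le_d2Abs v y 0 γ)
    (abs_nonneg _) (zero_le_one.trans (one_le_jb _))
  have := sum_abs_rotVF_pd_le y hv γ
  have := dGammaAbs_nonneg v y
  have := dAbs_nonneg v y
  rw [goodDerivNorm]
  nlinarith

-- Decompose `∂_β (∂_γ v)`, then, by symmetry of `∂²v`, each `∂_γ (∂_j v)`.
lemma abs_pd_pd_sub_nullVec_le (c : ℝ) (hv : ContDiff ℝ 2 v) (hy : 0 < spr y) {E : ℝ}
    (hE : ∀ δ, goodDerivNorm c (pd δ v) y ≤ E) (β γ : Fin 4) :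
    |pd β (pd γ v) y
        - nullVec c y β * nullVec c y γ * ∑ j, unitRadial y j * radialPd (pd j.succ v) y|
      ≤ (3 * |c| + 4) * (E / spr y) := by
  have hdecomp : ∀ α δ, |pd α (pd δ v) y - nullVec c y α * radialPd (pd δ v) y| ≤ E / spr y :=
    fun α δ => (abs_pd_sub_nullVec_mul_le c (pd δ v) hy α).trans
      (div_le_div_of_nonneg_right (hE δ) hy.le)
  have hrad : |radialPd (pd γ v) y
      - nullVec c y γ * ∑ j, unitRadial y j * radialPd (pd j.succ v) y| ≤ 3 * (E / spr y) := by
    have heq : radialPd (pd γ v) y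
        - nullVec c y γ * ∑ j, unitRadial y j * radialPd (pd j.succ v) y
        = ∑ j, unitRadial y j
          * (pd γ (pd j.succ v) y - nullVec c y γ * radialPd (pd j.succ v) y) := by
      simp only [radialPd, mul_sub, sum_sub_distrib, mul_sum, pd_pd_comm hv _ γ]
      exact congrArg _ (sum_congr rfl fun _ _ => sum_congr rfl fun _ _ => mul_left_comm _ _ _)
    rw [heq]
    calc _ ≤ ∑ j : Fin 3, |pd γ (pd j.succ v) y - nullVec c y γ * radialPd (pd j.succ v) y| := by
          refine (abs_sum_le_sum_abs _ _).trans (sum_le_sum fun j _ => ?_)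
          rw [abs_mul]
          exact mul_le_of_le_one_left (abs_nonneg _) (abs_unitRadial_le_one y j)
      _ ≤ ∑ _j : Fin 3, E / spr y := sum_le_sum fun j _ => hdecomp γ j.succ
      _ = 3 * (E / spr y) := by simp
  have hsplit := abs_add_le (pd β (pd γ v) y - nullVec c y β * radialPd (pd γ v) y)
    (nullVec c y β
      * (radialPd (pd γ v) y - nullVec c y γ * ∑ j, unitRadial y j * radialPd (pd j.succ v) y))
  rw [abs_mul] at hsplit
  have hξ := mul_le_mul (abs_nullVec_le c y β) hrad (abs_nonneg _) (by positivity)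
  calc _ = |pd β (pd γ v) y - nullVec c y β * radialPd (pd γ v) y
          + nullVec c y β * (radialPd (pd γ v) y
            - nullVec c y γ * ∑ j, unitRadial y j * radialPd (pd j.succ v) y)| := by ring_nf
    _ ≤ E / spr y + (|c| + 1) * (3 * (E / spr y)) := by linarith [hdecomp β γ]
    _ = (3 * |c| + 4) * (E / spr y) := by ring

end GoodDerivatives

section NullFormEstimate

variable {Q : Fin 4 → Fin 4 → Fin 4 → ℝ} {c : ℝ} {u v : (Fin 4 → ℝ) → ℝ} {y : Fin 4 → ℝ}

lemma trilinear_nullVec_eq_zero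
    (hnull : ∀ ξ : Fin 4 → ℝ, ξ 0 ^ 2 = c ^ 2 * ∑ i : Fin 3, (ξ i.succ) ^ 2 →
      ∑ α : Fin 4, ∑ β : Fin 4, ∑ γ : Fin 4, Q α β γ * ξ α * ξ β * ξ γ = 0)
    (hy : spr y ≠ 0) :
    trilinear Q (nullVec c y) (fun β γ => nullVec c y β * nullVec c y γ) = 0 := by
  simp only [trilinear, ← mul_assoc]
  exact hnull _ (nullVec_zero_sq c hy)

lemma abs_trilinear_pd_le_of_spr_pos
    (hnull : ∀ ξ : Fin 4 → ℝ, ξ 0 ^ 2 = c ^ 2 * ∑ i : Fin 3, (ξ i.succ) ^ 2 →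
      ∑ α : Fin 4, ∑ β : Fin 4, ∑ γ : Fin 4, Q α β γ * ξ α * ξ β * ξ γ = 0)
    (hv : ContDiff ℝ 2 v) (hy : 0 < spr y) :
    |trilinear Q (fun α => pd α u y) (fun β γ => pd β (pd γ v) y)|
      ≤ (∑ α, ∑ β, ∑ γ, |Q α β γ|) * ((|c| + 1) * (3 * |c| + 4) * (|c| + 18)) / spr y *
        nullFormMajorant c u v y := by
  have hbound := abs_trilinear_le_of_null Q (T := radialPd u y)
    (trilinear_nullVec_eq_zero hnull hy.ne') (abs_nullVec_le c y)
    (fun α => (abs_pd_sub_nullVec_mul_le c u hy α).trans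
      (div_le_div_of_nonneg_right (goodDerivNorm_le c u y) hy.le))
    (abs_pd_pd_le_d2Abs v y) (abs_pd_pd_sub_nullVec_le c hv hy (goodDerivNorm_pd_le c hv))
  set J := jb (c * y 0 - spr y)
  have hT := abs_radialPd_le u y
  have hJ : 1 ≤ J := one_le_jb _
  have ha := abs_nonneg c
  have hΓ := gammaAbs_nonneg u y
  have hdu := dAbs_nonneg u y
  have hdv := dAbs_nonneg v y
  have hd2 := d2Abs_nonneg v y
  have hdΓ := dGammaAbs_nonneg v y
  refine hbound.trans ?_
  rw [nullFormMajorant]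
  calc _ = (∑ α, ∑ β, ∑ γ, |Q α β γ|) * (((|c| + 2) * gammaAbs u y + J * dAbs u y) * d2Abs v y
          + (|c| + 1) * (3 * |c| + 4) * |radialPd u y|
            * ((|c| + 18) * (dGammaAbs v y + dAbs v y) + J * d2Abs v y)) / spr y := by ring
    _ ≤ (∑ α, ∑ β, ∑ γ, |Q α β γ|) * ((|c| + 1) * (3 * |c| + 4) * (|c| + 18)
          * (gammaAbs u y * d2Abs v y + dAbs u y * dGammaAbs v y + dAbs u y * dAbs v y
            + J * dAbs u y * d2Abs v y)) / spr y := by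
        gcongr
        have hK1 : |c| + 2 ≤ (|c| + 1) * (3 * |c| + 4) * (|c| + 18) := by
          nlinarith [mul_nonneg ha ha, mul_nonneg (mul_nonneg ha ha) ha]
        have hK2 : 1 + (|c| + 1) * (3 * |c| + 4) ≤ (|c| + 1) * (3 * |c| + 4) * (|c| + 18) := by
          nlinarith [mul_nonneg ha ha, mul_nonneg (mul_nonneg ha ha) ha]
        have hTE := mul_le_mul_of_nonneg_right hT
          (by positivity : 0 ≤ (|c| + 18) * (dGammaAbs v y + dAbs v y) + J * d2Abs v y)
        nlinarith [mul_le_mul_of_nonneg_right hK1 (mul_nonneg hΓ hd2),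
          mul_le_mul_of_nonneg_right hK2 (mul_nonneg (mul_nonneg (by positivity : 0 ≤ J) hdu) hd2),
          mul_le_mul_of_nonneg_left hTE (by positivity : (0:ℝ) ≤ (|c| + 1) * (3 * |c| + 4))]
    _ = _ := by ring

end NullFormEstimate

theorem stmt_7_general (c : ℝ) (Q : Fin 4 → Fin 4 → Fin 4 → ℝ)
    (hnull : ∀ ξ : Fin 4 → ℝ, ξ 0 ^ 2 = c ^ 2 * ∑ i : Fin 3, (ξ i.succ) ^ 2 →
      ∑ α : Fin 4, ∑ β : Fin 4, ∑ γ : Fin 4, Q α β γ * ξ α * ξ β * ξ γ = 0) :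
    ∃ C : ℝ, 0 < C ∧ ∀ u v : (Fin 4 → ℝ) → ℝ, ContDiff ℝ 2 u → ContDiff ℝ 2 v →
      ∀ y : Fin 4 → ℝ, 0 ≤ y 0 → c * y 0 / 2 ≤ spr y →
        |∑ α : Fin 4, ∑ β : Fin 4, ∑ γ : Fin 4, Q α β γ * pd α u y * pd β (pd γ v) y| ≤
          C / jb (spr y) *
            (gammaAbs u y * d2Abs v y + dAbs u y * dGammaAbs v y +
              dAbs u y * dAbs v y + jb (c * y 0 - spr y) * dAbs u y * d2Abs v y) := by
  set M := ∑ α, ∑ β, ∑ γ, |Q α β γ|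
  set K := (|c| + 1) * (3 * |c| + 4) * (|c| + 18)
  have hK : 1 ≤ K := by
    have ha := abs_nonneg c
    nlinarith [mul_nonneg ha ha, mul_nonneg (mul_nonneg ha ha) ha]
  have hM : 0 ≤ M := by positivity
  refine ⟨(M + 1) * K * √2, by positivity, fun u v _ hv y _ _ => ?_⟩
  change |trilinear Q (fun α => pd α u y) (fun β γ => pd β (pd γ v) y)|
    ≤ (M + 1) * K * √2 / jb (spr y) * nullFormMajorant c u v y
  rw [mul_div_assoc]
  have hB := nullFormMajorant_nonneg c u v y
  rcases le_or_gt (spr y) 1 with hr | hr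
  · have h := one_le_sqrt_two_div_jb (abs_le.2 ⟨by linarith [spr_nonneg y], hr⟩)
    have hcoef : M ≤ (M + 1) * K * (√2 / jb (spr y)) :=
      (by nlinarith : M ≤ (M + 1) * K * 1).trans (mul_le_mul_of_nonneg_left h (by positivity))
    exact (abs_trilinear_le Q (abs_pd_le_dAbs u y) (abs_pd_pd_le_d2Abs v y)).trans
      (mul_le_mul hcoef (dAbs_mul_d2Abs_le_nullFormMajorant c u v y)
        (mul_nonneg (dAbs_nonneg u y) (d2Abs_nonneg v y)) (by positivity))
  · have hcoef : M * K / spr y ≤ (M + 1) * K * (√2 / jb (spr y)) := by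
      rw [div_eq_mul_inv]
      exact mul_le_mul (mul_le_mul_of_nonneg_right (by linarith) (by positivity))
        (inv_le_sqrt_two_div_jb hr.le) (by positivity) (by positivity)
    exact (abs_trilinear_pd_le_of_spr_pos hnull hv (by linarith)).trans
      (mul_le_mul_of_nonneg_right hcoef hB)

/-- Pointwise quasilinear null-form estimate: if the constant coefficients `Q^{αβγ}`
satisfy the null condition relative to the speed `c`, then on the region
`r ≥ ct/2`, `t ≥ 0`,
`|Q^{αβγ} ∂_α u ∂_β∂_γ v| ≤ (C/⟨r⟩)(|Γu||∂²v| + |∂u||∂Γv| + |∂u||∂v| + ⟨ct-r⟩|∂u||∂²v|)`. -/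
theorem stmt_7 (c : ℝ) (hc : 0 < c) (Q : Fin 4 → Fin 4 → Fin 4 → ℝ)
    (hnull : ∀ ξ : Fin 4 → ℝ, ξ 0 ^ 2 = c ^ 2 * ∑ i : Fin 3, (ξ i.succ) ^ 2 →
      ∑ α : Fin 4, ∑ β : Fin 4, ∑ γ : Fin 4, Q α β γ * ξ α * ξ β * ξ γ = 0) :
    ∃ C : ℝ, 0 < C ∧ ∀ u v : (Fin 4 → ℝ) → ℝ, ContDiff ℝ 2 u → ContDiff ℝ 2 v →
      ∀ y : Fin 4 → ℝ, 0 ≤ y 0 → c * y 0 / 2 ≤ spr y →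
        |∑ α : Fin 4, ∑ β : Fin 4, ∑ γ : Fin 4, Q α β γ * pd α u y * pd β (pd γ v) y| ≤
          C / jb (spr y) *
            (gammaAbs u y * d2Abs v y + dAbs u y * dGammaAbs v y +
              dAbs u y * dAbs v y + jb (c * y 0 - spr y) * dAbs u y * d2Abs v y) :=
  stmt_7_general c Q hnull
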